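/- arXiv:1105.4592 — 3 statements merged into one kernel-verified Lean document; each statement's English description precedes it below -/
import Mathlib

section
/- Let 0 < α < 1, T > 0, and let v : [0,T] → ℝ be absolutely continuous on [0,T]. Then for every t ∈ (0,T], v(t) · ∂_{0t}^α v(t) ≥ (1/2) ∂_{0t}^α (v²)(t), i.e. v(t) · (1/Γ(1−α)) ∫_0^t v′(τ)(t−τ)^{−α} dτ ≥ (1/2Γ(1−α)) ∫_0^t (v²)′(τ)(t−τ)^{−α} dτ. -/
open MeasureTheory Set

/-- The Caputo fractional derivative of order `α`, `0 < α < 1`, of `v` at `t`: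
`∂_{0t}^α v(t) = (1/Γ(1-α)) ∫_0^t v'(τ) (t-τ)^(-α) dτ`. -/
noncomputable def caputo (α : ℝ) (v : ℝ → ℝ) (t : ℝ) : ℝ :=
  (1 / Real.Gamma (1 - α)) * ∫ τ in (0:ℝ)..t, deriv v τ * (t - τ) ^ (-α)

/-- `v` is absolutely continuous on `[a,b]`: its derivative is integrable and the
fundamental theorem of calculus holds. -/
def AbsContinuousOn (v : ℝ → ℝ) (a b : ℝ) : Prop :=
  IntervalIntegrable (deriv v) MeasureTheory.volume a b ∧
  ∀ t ∈ Set.Icc a b, v t = v a + ∫ τ in a..t, deriv v τ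

/-!
With `G(τ) = v(t) - v(τ) = ∫_τ^t v'`, the difference `v(t) ∂^α v(t) - ½ ∂^α (v²)(t)` equals
`Γ(1-α)⁻¹ ∫_0^t v'(τ) G(τ) (t-τ)^(-α) dτ`. The kernel is increasing,
`(t-τ)^(-α) = t^(-α) + ∫_0^τ α (t-u)^(-α-1) du`, so by Fubini this integral is
`t^(-α) ∫_0^t v' G + ∫_0^t α (t-u)^(-α-1) (∫_u^t v' G) du`. Every tail `∫_u^t v' G` equals
`G(u)² / 2 ≥ 0`, by Fubini once more: the square `(∫_u^t v')²` is twice the integral of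
`v'(σ) v'(τ)` over the triangle `σ < τ`.
-/

open Filter Topology

theorem ae_restrict_Ioc_mem_Ioo {a t : ℝ} : ∀ᵐ τ ∂(volume.restrict (Ioc a t)), τ ∈ Ioo a t := by
  rw [← Measure.restrict_congr_set Ioo_ae_eq_Ioc]
  exact ae_restrict_mem measurableSet_Ioo

theorem setIntegral_Ioc_add_Ioc {f : ℝ → ℝ} {a x t : ℝ} (hax : a ≤ x) (hxt : x ≤ t)
    (hf : IntegrableOn f (Ioc a t)) :
    (∫ s in Ioc a x, f s) + ∫ s in Ioc x t, f s = ∫ s in Ioc a t, f s := by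
  rw [← setIntegral_union (Ioc_disjoint_Ioc_of_le le_rfl) measurableSet_Ioc
    (hf.mono_set (Ioc_subset_Ioc_right hxt)) (hf.mono_set (Ioc_subset_Ioc_left hax)),
    Ioc_union_Ioc_eq_Ioc hax hxt]

theorem setIntegral_Ioc_ite_lt_right {f g : ℝ → ℝ} {a t x : ℝ} (hax : a ≤ x) :
    ∫ y in Ioc a t, (if x < y then f x * g y else 0) = f x * ∫ y in Ioc x t, g y := by
  have hset : Ioc a t ∩ Ioi x = Ioc x t := by
    ext y; simp only [mem_inter_iff, mem_Ioc, mem_Ioi]; constructor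
    · rintro ⟨⟨-, hyt⟩, hxy⟩; exact ⟨hxy, hyt⟩
    · rintro ⟨hxy, hyt⟩; exact ⟨⟨hax.trans_lt hxy, hyt⟩, hxy⟩
  rw [← integral_const_mul, ← hset, ← setIntegral_indicator measurableSet_Ioi]
  rfl

theorem setIntegral_Ioc_ite_lt_left {f g : ℝ → ℝ} {a t y : ℝ} (hyt : y ≤ t) :
    ∫ x in Ioc a t, (if x < y then f x * g y else 0) = (∫ x in Ioc a y, f x) * g y := by
  have hset : Ioc a t ∩ Iio y = Ioo a y := by
    ext x; simp only [mem_inter_iff, mem_Ioc, mem_Iio, mem_Ioo]; constructor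
    · rintro ⟨⟨hax, -⟩, hxy⟩; exact ⟨hax, hxy⟩
    · rintro ⟨hax, hxy⟩; exact ⟨⟨hax, hxy.le.trans hyt⟩, hxy⟩
  rw [← integral_mul_const, integral_Ioc_eq_integral_Ioo (x := a) (y := y), ← hset,
    ← setIntegral_indicator measurableSet_Iio]
  rfl

theorem setIntegral_Ioc_mul_tail_eq_sq_div_two {f : ℝ → ℝ} {a t : ℝ}
    (hf : IntegrableOn f (Ioc a t)) :
    ∫ x in Ioc a t, f x * ∫ y in Ioc x t, f y = (∫ y in Ioc a t, f y) ^ 2 / 2 := by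
  set Ψ : ℝ → ℝ → ℝ := fun x y => if x < y then f x * f y else 0
  have hΨ : Integrable (Function.uncurry Ψ)
      ((volume.restrict (Ioc a t)).prod (volume.restrict (Ioc a t))) :=
    (hf.mul_prod hf).indicator (measurableSet_lt measurable_fst measurable_snd)
  have hleft (x : ℝ) (hx : x ∈ Ioc a t) :
      ∫ y in Ioc a t, Ψ x y = f x * ∫ y in Ioc x t, f y :=
    setIntegral_Ioc_ite_lt_right hx.1.le
  have hright (y : ℝ) (hy : y ∈ Ioc a t) :
      ∫ x in Ioc a t, Ψ x y = (∫ x in Ioc a y, f x) * f y :=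
    setIntegral_Ioc_ite_lt_left hy.2
  have hswap := integral_integral_swap hΨ
  rw [setIntegral_congr_fun measurableSet_Ioc hleft,
    setIntegral_congr_fun measurableSet_Ioc hright] at hswap
  have hint_left : IntegrableOn (fun x => f x * ∫ y in Ioc x t, f y) (Ioc a t) :=
    hΨ.integral_prod_left.congr ((ae_restrict_iff' measurableSet_Ioc).mpr (.of_forall hleft))
  have hint_right : IntegrableOn (fun y => (∫ x in Ioc a y, f x) * f y) (Ioc a t) :=
    hΨ.integral_prod_right.congr ((ae_restrict_iff' measurableSet_Ioc).mpr (.of_forall hright))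
  have hsum : (∫ x in Ioc a t, f x * ∫ y in Ioc x t, f y)
      + (∫ y in Ioc a t, (∫ x in Ioc a y, f x) * f y) = (∫ y in Ioc a t, f y) ^ 2 := by
    rw [← integral_add hint_left hint_right, sq, ← integral_mul_const]
    refine setIntegral_congr_fun measurableSet_Ioc fun x hx => ?_
    rw [← setIntegral_Ioc_add_Ioc hx.1.le hx.2 hf]
    ring
  linarith

section IncreasingKernel

variable {φ K w : ℝ → ℝ} {a t c : ℝ}

theorem setIntegral_Ioc_mul_eq_of_eq_add_integral
    (hφ : IntegrableOn φ (Ioc a t)) (hφK : IntegrableOn (fun τ => φ τ * K τ) (Ioc a t))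
    (hw : Measurable w) (hw_nonneg : ∀ u ∈ Ioo a t, 0 ≤ w u)
    (hw_int : ∀ τ ∈ Ioo a t, IntegrableOn w (Ioc a τ))
    (hK : ∀ τ ∈ Ioo a t, K τ = c + ∫ u in Ioc a τ, w u) :
    ∫ τ in Ioc a t, φ τ * K τ
      = c * (∫ τ in Ioc a t, φ τ) + ∫ u in Ioc a t, w u * ∫ τ in Ioc u t, φ τ := by
  have hK_sub (τ : ℝ) (hτ : τ ∈ Ioo a t) : ∫ u in Ioc a τ, w u = K τ - c := by
    rw [hK τ hτ]; ring
  set Ψ : ℝ → ℝ → ℝ := fun u τ => if u < τ then w u * φ τ else 0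
  have hΨm : AEStronglyMeasurable (Function.uncurry Ψ)
      ((volume.restrict (Ioc a t)).prod (volume.restrict (Ioc a t))) :=
    ((hw.comp measurable_fst).aestronglyMeasurable.mul hφ.1.comp_snd).indicator
      (measurableSet_lt measurable_fst measurable_snd)
  have hΨ : Integrable (Function.uncurry Ψ)
      ((volume.restrict (Ioc a t)).prod (volume.restrict (Ioc a t))) := by
    refine (integrable_prod_iff' hΨm).mpr ⟨?_, ?_⟩
    · filter_upwards [ae_restrict_Ioc_mem_Ioo] with τ hτ
      refine (integrable_indicator_iff measurableSet_Iio).mpr ?_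
      rw [IntegrableOn, Measure.restrict_restrict measurableSet_Iio]
      have hsub : Iio τ ∩ Ioc a t ⊆ Ioc a τ := fun u hu => ⟨hu.2.1, hu.1.le⟩
      exact IntegrableOn.mono_set ((hw_int τ hτ).mul_const (φ τ)) hsub
    · refine (hφK.sub (hφ.const_mul c)).norm.congr ?_
      filter_upwards [ae_restrict_Ioc_mem_Ioo] with τ hτ
      have hnorm : (fun u => ‖Function.uncurry Ψ (u, τ)‖)
          = fun u => if u < τ then ‖w u‖ * ‖φ τ‖ else 0 := by
        funext u; by_cases h : u < τ <;> simp [Ψ, h, norm_mul]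
      have hw_norm : ∫ u in Ioc a τ, ‖w u‖ = K τ - c :=
        (setIntegral_congr_fun measurableSet_Ioc fun u hu =>
          Real.norm_of_nonneg (hw_nonneg u ⟨hu.1, hu.2.trans_lt hτ.2⟩)).trans (hK_sub τ hτ)
      have hKc : 0 ≤ K τ - c := hw_norm ▸ setIntegral_nonneg measurableSet_Ioc fun _ _ =>
        norm_nonneg _
      rw [hnorm, setIntegral_Ioc_ite_lt_left (f := fun u => ‖w u‖) (g := fun τ => ‖φ τ‖) hτ.2.le,
        hw_norm, ← Real.norm_of_nonneg hKc, ← norm_mul, Pi.sub_apply]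
      congr 1; ring
  have hleft : ∫ u in Ioc a t, ∫ τ in Ioc a t, Ψ u τ
      = ∫ u in Ioc a t, w u * ∫ τ in Ioc u t, φ τ :=
    setIntegral_congr_fun measurableSet_Ioc fun u hu => setIntegral_Ioc_ite_lt_right hu.1.le
  have hright : ∫ τ in Ioc a t, ∫ u in Ioc a t, Ψ u τ
      = (∫ τ in Ioc a t, φ τ * K τ) - c * ∫ τ in Ioc a t, φ τ := by
    rw [← integral_const_mul, ← integral_sub hφK (hφ.const_mul c)]
    refine integral_congr_ae ?_
    filter_upwards [ae_restrict_Ioc_mem_Ioo] with τ hτ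
    rw [setIntegral_Ioc_ite_lt_left hτ.2.le, hK_sub τ hτ]
    ring
  linarith [integral_integral_swap hΨ]

theorem setIntegral_Ioc_mul_nonneg_of_tail_nonneg
    (hφ : IntegrableOn φ (Ioc a t)) (hφK : IntegrableOn (fun τ => φ τ * K τ) (Ioc a t))
    (hw : Measurable w) (hw_nonneg : ∀ u ∈ Ioo a t, 0 ≤ w u)
    (hw_int : ∀ τ ∈ Ioo a t, IntegrableOn w (Ioc a τ))
    (hK : ∀ τ ∈ Ioo a t, K τ = c + ∫ u in Ioc a τ, w u) (hc : 0 ≤ c)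
    (htail : ∀ u ∈ Icc a t, 0 ≤ ∫ τ in Ioc u t, φ τ) :
    0 ≤ ∫ τ in Ioc a t, φ τ * K τ := by
  rw [setIntegral_Ioc_mul_eq_of_eq_add_integral hφ hφK hw hw_nonneg hw_int hK]
  have hφ_nonneg : 0 ≤ ∫ τ in Ioc a t, φ τ := by
    rcases lt_or_ge t a with hta | hat
    · simp [Ioc_eq_empty_of_le hta.le]
    · exact htail a ⟨le_rfl, hat⟩
  refine add_nonneg (mul_nonneg hc hφ_nonneg) (integral_nonneg_of_ae ?_)
  filter_upwards [ae_restrict_Ioc_mem_Ioo] with u hu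
  exact mul_nonneg (hw_nonneg u hu) (htail u (Ioo_subset_Icc_self hu))

end IncreasingKernel

theorem continuousOn_rpow_sub (p : ℝ) {s : Set ℝ} {t : ℝ} (hs : ∀ u ∈ s, u < t) :
    ContinuousOn (fun u => (t - u) ^ p) s :=
  (continuousOn_const.sub continuousOn_id).rpow_const fun u hu =>
    Or.inl (sub_ne_zero.2 (hs u hu).ne')

theorem rpow_sub_neg_eq_add_integral (α : ℝ) {a τ t : ℝ} (haτ : a ≤ τ) (hτt : τ < t) :
    (t - τ) ^ (-α) = (t - a) ^ (-α) + ∫ u in Ioc a τ, α * (t - u) ^ (-α - 1) := by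
  have hpos : ∀ u ∈ uIcc a τ, 0 < t - u := fun u hu => by
    rw [uIcc_of_le haτ] at hu; linarith [hu.2]
  have hderiv : ∀ u ∈ uIcc a τ,
      HasDerivAt (fun u => (t - u) ^ (-α)) (α * (t - u) ^ (-α - 1)) u := fun u hu => by
    convert ((hasDerivAt_id' u).const_sub t).rpow_const (p := -α) (Or.inl (hpos u hu).ne')
      using 1
    ring
  have hcont : ContinuousOn (fun u => α * (t - u) ^ (-α - 1)) (uIcc a τ) :=
    continuousOn_const.mul <| continuousOn_rpow_sub _ fun u hu => sub_pos.1 (hpos u hu)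
  rw [← intervalIntegral.integral_of_le haτ,
    intervalIntegral.integral_eq_sub_of_hasDerivAt hderiv hcont.intervalIntegrable]
  ring

theorem continuousOn_setIntegral_Ioc_left {f : ℝ → ℝ} {a t : ℝ}
    (hf : IntegrableOn f (Ioc a t)) :
    ContinuousOn (fun x => ∫ s in Ioc x t, f s) (Icc a t) := by
  rcases lt_or_ge t a with hta | hat
  · simp [Icc_eq_empty_of_lt hta]
  have h := intervalIntegral.continuousOn_primitive_interval_left (f := f) (μ := volume)
    (a := a) (b := t) (by rwa [uIcc_of_le hat, integrableOn_Icc_iff_integrableOn_Ioc])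
  rw [uIcc_of_le hat] at h
  exact h.congr fun x hx => (intervalIntegral.integral_of_le hx.2).symm

theorem setIntegral_Ioc_mul_tail_mul_rpow_nonneg {f : ℝ → ℝ} {α a t : ℝ} (hα : 0 ≤ α)
    (hf : IntegrableOn f (Ioc a t))
    (hint : IntegrableOn (fun τ => (f τ * ∫ s in Ioc τ t, f s) * (t - τ) ^ (-α)) (Ioc a t)) :
    0 ≤ ∫ τ in Ioc a t, (f τ * ∫ s in Ioc τ t, f s) * (t - τ) ^ (-α) := by
  rcases lt_or_ge t a with hta | hat
  · simp [Ioc_eq_empty_of_le hta.le]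
  refine setIntegral_Ioc_mul_nonneg_of_tail_nonneg (w := fun u => α * (t - u) ^ (-α - 1))
    (c := (t - a) ^ (-α)) ?_ hint (by fun_prop) ?_ ?_ ?_
    (Real.rpow_nonneg (sub_nonneg.2 hat) _) ?_
  · exact hf.mul_continuousOn_of_subset (continuousOn_setIntegral_Ioc_left hf)
      measurableSet_Ioc isCompact_Icc Ioc_subset_Icc_self
  · exact fun u hu => mul_nonneg hα (Real.rpow_nonneg (by linarith [hu.2]) _)
  · intro τ hτ
    refine (ContinuousOn.integrableOn_Icc ?_).mono_set Ioc_subset_Icc_self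
    exact continuousOn_const.mul <| continuousOn_rpow_sub _ fun u hu => hu.2.trans_lt hτ.2
  · exact fun τ hτ => rpow_sub_neg_eq_add_integral α hτ.1.le hτ.2
  · intro u hu
    rw [setIntegral_Ioc_mul_tail_eq_sq_div_two (hf.mono_set (Ioc_subset_Ioc_left hu.1))]
    positivity

theorem integrableOn_Ioc_of_integrableOn_mul {h ψ : ℝ → ℝ} {a t : ℝ}
    (hh : ContinuousOn h (Icc a t)) (hht : h t ≠ 0)
    (hhψ : IntegrableOn (fun x => h x * ψ x) (Ioc a t))
    (hψ : ∀ s < t, IntegrableOn ψ (Ioc a s)) :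
    IntegrableOn ψ (Ioc a t) := by
  rcases le_or_gt t a with hta | hat
  · simp [Ioc_eq_empty_of_le hta]
  obtain ⟨s, hst, hs⟩ : ∃ s < t, Icc s t ⊆ {x | h x ≠ 0} := by
    have hmem : {x | h x ≠ 0} ∈ 𝓝[Icc a t] t :=
      (hh t ⟨hat.le, le_rfl⟩).preimage_mem_nhdsWithin (isOpen_ne.mem_nhds hht)
    rwa [nhdsWithin_Icc_eq_nhdsLE hat, mem_nhdsLE_iff_exists_Icc_subset] at hmem
  set r := max a s
  have har : a ≤ r := le_max_left _ _
  have hrt : r < t := max_lt hat hst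
  have hne (x : ℝ) (hx : x ∈ Icc r t) : h x ≠ 0 := hs (Icc_subset_Icc_left (le_max_right _ _) hx)
  have hright : IntegrableOn ψ (Ioc r t) := by
    have hinv : ContinuousOn (fun x => (h x)⁻¹) (Icc r t) :=
      (hh.mono (Icc_subset_Icc_left har)).inv₀ hne
    refine ((hhψ.mono_set (Ioc_subset_Ioc_left har)).mul_continuousOn_of_subset hinv
      measurableSet_Ioc isCompact_Icc Ioc_subset_Icc_self).congr_fun (fun x hx => ?_)
      measurableSet_Ioc
    field_simp [hne x (Ioc_subset_Icc_self hx)]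
  have hunion := (hψ r hrt).union hright
  rwa [Ioc_union_Ioc_eq_Ioc har hrt.le] at hunion

namespace AbsContinuousOn

variable {v : ℝ → ℝ} {a b : ℝ}

theorem mono_right {c : ℝ} (hv : AbsContinuousOn v a b) (hac : a ≤ c) (hcb : c ≤ b) :
    AbsContinuousOn v a c := by
  refine ⟨hv.1.mono_set ?_, fun x hx => hv.2 x ⟨hx.1, hx.2.trans hcb⟩⟩
  rw [uIcc_of_le hac, uIcc_of_le (hac.trans hcb)]
  exact Icc_subset_Icc_right hcb

theorem integrableOn_Ioc (hv : AbsContinuousOn v a b) (hab : a ≤ b) :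
    IntegrableOn (deriv v) (Ioc a b) :=
  (intervalIntegrable_iff_integrableOn_Ioc_of_le hab).1 hv.1

theorem sub_eq_setIntegral_Ioc (hv : AbsContinuousOn v a b) {x y : ℝ} (hax : a ≤ x)
    (hxy : x ≤ y) (hyb : y ≤ b) : v y - v x = ∫ s in Ioc x y, deriv v s := by
  rw [hv.2 y ⟨hax.trans hxy, hyb⟩, hv.2 x ⟨hax, hxy.trans hyb⟩,
    intervalIntegral.integral_of_le (hax.trans hxy), intervalIntegral.integral_of_le hax,
    ← setIntegral_Ioc_add_Ioc hax hxy ((hv.integrableOn_Ioc (hax.trans (hxy.trans hyb))).mono_set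
      (Ioc_subset_Ioc_right hyb))]
  ring

theorem continuousOn (hv : AbsContinuousOn v a b) : ContinuousOn v (Icc a b) := by
  rcases lt_or_ge b a with hba | hab
  · simp [Icc_eq_empty_of_lt hba]
  have hprim := intervalIntegral.continuousOn_primitive_interval (f := deriv v) (μ := volume)
    (a := a) (b := b) (by rw [uIcc_of_le hab, integrableOn_Icc_iff_integrableOn_Ioc]
                          exact hv.integrableOn_Ioc hab)
  rw [uIcc_of_le hab] at hprim
  exact (continuousOn_const.add hprim).congr hv.2

theorem ae_hasDerivAt (hv : AbsContinuousOn v a b) :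
    ∀ᵐ x, x ∈ Ioo a b → HasDerivAt v (deriv v x) x := by
  filter_upwards [hv.1.ae_hasDerivAt_integral] with x hx hxab
  have hxI : x ∈ uIcc a b := by
    rw [uIcc_of_le (hxab.1.trans hxab.2).le]; exact Ioo_subset_Icc_self hxab
  refine ((hx hxI a left_mem_uIcc).const_add (v a)).congr_of_eventuallyEq ?_
  filter_upwards [Ioo_mem_nhds hxab.1 hxab.2] with y hy using hv.2 y (Ioo_subset_Icc_self hy)

theorem ae_deriv_sq (hv : AbsContinuousOn v a b) :
    ∀ᵐ x ∂(volume.restrict (Ioc a b)), deriv (fun s => v s ^ 2) x = 2 * v x * deriv v x := by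
  filter_upwards [ae_restrict_Ioc_mem_Ioo, ae_restrict_of_ae hv.ae_hasDerivAt] with x hx hd
  rw [((hd hx).fun_pow 2).deriv]
  ring

theorem caputo_sq_eq {t : ℝ} (hv : AbsContinuousOn v 0 t) (ht : 0 ≤ t) (α : ℝ) :
    caputo α (fun s => v s ^ 2) t
      = 2 * (1 / Real.Gamma (1 - α)) * ∫ τ in Ioc 0 t, v τ * (deriv v τ * (t - τ) ^ (-α)) := by
  rw [caputo, intervalIntegral.integral_of_le ht,
    integral_congr_ae (g := fun τ => 2 * (v τ * (deriv v τ * (t - τ) ^ (-α)))),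
    integral_const_mul]
  · ring
  filter_upwards [hv.ae_deriv_sq] with τ hτ
  rw [hτ]
  ring

theorem setIntegral_mul_deriv_mul_rpow_le {α t : ℝ} (hv : AbsContinuousOn v a t) (hα : 0 ≤ α)
    (hat : a ≤ t) :
    ∫ τ in Ioc a t, v τ * (deriv v τ * (t - τ) ^ (-α))
      ≤ v t * ∫ τ in Ioc a t, deriv v τ * (t - τ) ^ (-α) := by
  have hf := hv.integrableOn_Ioc hat
  by_cases hI : IntegrableOn (fun τ => v τ * (deriv v τ * (t - τ) ^ (-α))) (Ioc a t)
  swap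
  -- `v` is bounded, so `v' (t - ·)^(-α)` is not integrable either and both sides are the junk `0`.
  · have hfK : ¬ IntegrableOn (fun τ => deriv v τ * (t - τ) ^ (-α)) (Ioc a t) := fun h =>
      hI (h.continuousOn_mul_of_subset hv.continuousOn isCompact_Icc measurableSet_Ioc
        Ioc_subset_Icc_self)
    rw [integral_undef hI, integral_undef hfK, mul_zero]
  have hI' : IntegrableOn (fun τ => v t * (deriv v τ * (t - τ) ^ (-α))) (Ioc a t) := by
    by_cases hvt : v t = 0
    · simp [hvt]
    refine (integrableOn_Ioc_of_integrableOn_mul hv.continuousOn hvt hI fun s hs => ?_).const_mul _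
    exact (hf.mono_set (Ioc_subset_Ioc_right hs.le)).mul_continuousOn_of_subset
      (continuousOn_rpow_sub _ fun u hu => hu.2.trans_lt hs) measurableSet_Ioc isCompact_Icc
      Ioc_subset_Icc_self
  have htail (τ : ℝ) (hτ : τ ∈ Ioc a t) :
      v t * (deriv v τ * (t - τ) ^ (-α)) - v τ * (deriv v τ * (t - τ) ^ (-α))
        = (deriv v τ * ∫ s in Ioc τ t, deriv v s) * (t - τ) ^ (-α) := by
    rw [← hv.sub_eq_setIntegral_Ioc hτ.1.le hτ.2 le_rfl]
    ring
  rw [← integral_const_mul, ← sub_nonneg, ← integral_sub hI' hI,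
    setIntegral_congr_fun measurableSet_Ioc htail]
  exact setIntegral_Ioc_mul_tail_mul_rpow_nonneg hα hf
    ((hI'.sub hI).congr_fun htail measurableSet_Ioc)

end AbsContinuousOn

theorem caputo_mul_self_ge_half_caputo_sq_general
    (α T : ℝ) (hα0 : 0 < α) (hα1 : α < 1)
    (v : ℝ → ℝ) (hv : AbsContinuousOn v 0 T) :
    ∀ t ∈ Set.Ioc (0:ℝ) T,
      v t * caputo α v t ≥ (1 / 2) * caputo α (fun s => (v s) ^ 2) t := by
  rintro t ⟨ht0, htT⟩
  have hvt := hv.mono_right ht0.le htT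
  have hΓ : 0 < 1 / Real.Gamma (1 - α) := one_div_pos.2 (Real.Gamma_pos_of_pos (sub_pos.2 hα1))
  have key := mul_le_mul_of_nonneg_left (hvt.setIntegral_mul_deriv_mul_rpow_le hα0.le ht0.le) hΓ.le
  rw [hvt.caputo_sq_eq ht0.le, caputo, intervalIntegral.integral_of_le ht0.le]
  linarith

/-- Lemma 1: for any absolutely continuous `v` on `[0,T]` and `0 < α < 1`,
`v(t) ∂_{0t}^α v(t) ≥ (1/2) ∂_{0t}^α (v²)(t)` for all `t ∈ (0,T]`. -/
theorem caputo_mul_self_ge_half_caputo_sq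
    (α T : ℝ) (hα0 : 0 < α) (hα1 : α < 1) (hT : 0 < T)
    (v : ℝ → ℝ) (hv : AbsContinuousOn v 0 T) :
    ∀ t ∈ Set.Ioc (0:ℝ) T,
      v t * caputo α v t ≥ (1 / 2) * caputo α (fun s => (v s) ^ 2) t :=
  caputo_mul_self_ge_half_caputo_sq_general α T hα0 hα1 v hv
end

section
/- Let 0 < α < 1, l > 0, T > 0, and let u : [0,l] × [0,T] → ℝ be continuous, with ∂u/∂t continuous on [0,l] × [0,T], such that for each fixed x the function t ↦ u(x,t) is absolutely continuous on [0,T]. Then for every t ∈ (0,T], ∫_0^l u(x,t) ∂_{0t}^α u(x,t) dx ≥ (1/2) ∂_{0t}^α ( ∫_0^l u(x,t)² dx ), where the Caputo derivative on the right acts on the function t ↦ ∫_0^l u(x,t)² dx. -/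
open MeasureTheory Set

/-!
Fix `x`, write `v = u(x, ·)` and `k(τ) = (t - τ)^(-α)`. Differentiating `∫₀ˡ u²` under the
integral sign and swapping the order of integration, the difference of the two sides becomes
`(1/Γ(1-α)) ∫₀ˡ ∫₀ᵗ (v(t) - v(τ)) v'(τ) k(τ) dτ dx`, so it suffices that each inner integral is
nonnegative. It equals `∫₀ᵗ (-G') k` for `G = (v(t) - v)² / 2`, which is nonnegative, vanishes
at `t` and is Lipschitz, say with constant `M`. Integrating by parts on `[0, s]` for `s < t`, and
using that `k` is increasing, `∫₀ˢ (-G') k ≥ -k(s) G(s) ≥ -M (t - s)^(1-α)`; let `s → t`.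
-/

open Filter Topology intervalIntegral Function
open scoped Interval

lemma MeasureTheory.IntegrableOn.intervalIntegrable_intervalIntegral {F : ℝ → ℝ → ℝ}
    {a b c d : ℝ} (hF : IntegrableOn (uncurry F) (Ι a b ×ˢ Ι c d)) :
    IntervalIntegrable (fun x => ∫ y in c..d, F x y) volume a b := by
  rw [IntegrableOn, Measure.volume_eq_prod, ← Measure.prod_restrict] at hF
  simp_rw [intervalIntegrable_iff, intervalIntegral_eq_integral_uIoc]
  exact Integrable.smul (if c ≤ d then (1 : ℝ) else -1) hF.integral_prod_left

lemma hasDerivAt_intervalIntegral_of_continuousOn {F F' : ℝ → ℝ → ℝ} {a b c d y₀ : ℝ}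
    (hF : ContinuousOn (uncurry F) ([[a, b]] ×ˢ Icc c d))
    (hF' : ContinuousOn (uncurry F') ([[a, b]] ×ˢ Icc c d))
    (hderiv : ∀ x ∈ [[a, b]], ∀ y ∈ Ioo c d, HasDerivAt (F x) (F' x y) y)
    (hy₀ : y₀ ∈ Ioo c d) :
    HasDerivAt (fun y => ∫ x in a..b, F x y) (∫ x in a..b, F' x y₀) y₀ := by
  obtain ⟨M, hM⟩ := (isCompact_uIcc.prod isCompact_Icc).exists_bound_of_continuousOn hF'
  have hmeas : ∀ {G : ℝ → ℝ → ℝ}, ContinuousOn (uncurry G) ([[a, b]] ×ˢ Icc c d) →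
      ∀ y ∈ Icc c d, AEStronglyMeasurable (fun x => G x y) (volume.restrict (Ι a b)) :=
    fun hG y hy => ((hG.uncurry_right y hy).mono uIoc_subset_uIcc).aestronglyMeasurable
      measurableSet_uIoc
  refine (hasDerivAt_integral_of_dominated_loc_of_deriv_le (F := fun y x => F x y)
    (F' := fun y x => F' x y) (bound := fun _ => M) (isOpen_Ioo.mem_nhds hy₀) ?_
    ((hF.uncurry_right y₀ (Ioo_subset_Icc_self hy₀)).intervalIntegrable)
    (hmeas hF' y₀ (Ioo_subset_Icc_self hy₀)) ?_ intervalIntegrable_const ?_).2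
  · filter_upwards [isOpen_Ioo.mem_nhds hy₀] with y hy
    exact hmeas hF y (Ioo_subset_Icc_self hy)
  · exact ae_of_all _ fun x hx y hy =>
      hM (x, y) ⟨uIoc_subset_uIcc hx, Ioo_subset_Icc_self hy⟩
  · exact ae_of_all _ fun x hx y hy => hderiv x (uIoc_subset_uIcc hx) y hy

section Kernel

variable {α : ℝ}

lemma intervalIntegrable_sub_rpow_neg (hα1 : α < 1) (a t : ℝ) :
    IntervalIntegrable (fun τ => (t - τ) ^ (-α)) volume a t := by
  simpa using (intervalIntegrable_rpow' (a := t - a) (b := t - t) (r := -α)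
    (by linarith)).comp_sub_left t

lemma ContinuousOn.intervalIntegrable_mul_sub_rpow_neg {g : ℝ → ℝ} {a t : ℝ}
    (hg : ContinuousOn g [[a, t]]) (hα1 : α < 1) :
    IntervalIntegrable (fun τ => g τ * (t - τ) ^ (-α)) volume a t :=
  (intervalIntegrable_iff.2 <| IntegrableOn.continuousOn_mul_of_subset hg
    (intervalIntegrable_sub_rpow_neg hα1 a t).def'
    isCompact_uIcc measurableSet_uIoc uIoc_subset_uIcc)

lemma ContinuousOn.integrableOn_mul_sub_rpow_neg {g : ℝ → ℝ → ℝ} {a b c t : ℝ}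
    (hg : ContinuousOn (uncurry g) ([[a, b]] ×ˢ [[c, t]])) (hα1 : α < 1) :
    IntegrableOn (uncurry fun x τ => g x τ * (t - τ) ^ (-α)) (Ι a b ×ˢ Ι c t) := by
  have hk : IntegrableOn (fun p : ℝ × ℝ => (t - p.2) ^ (-α)) (Ι a b ×ˢ Ι c t) := by
    rw [IntegrableOn, Measure.volume_eq_prod, ← Measure.prod_restrict]
    simpa only [one_mul] using (integrableOn_const (s := Ι a b) (C := (1 : ℝ))
      measure_Ioc_lt_top.ne).mul_prod (intervalIntegrable_sub_rpow_neg hα1 c t).def'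
  exact hk.continuousOn_mul_of_subset hg (isCompact_uIcc.prod isCompact_uIcc)
    (measurableSet_uIoc.prod measurableSet_uIoc) (prod_mono uIoc_subset_uIcc uIoc_subset_uIcc)

lemma ContinuousOn.intervalIntegrable_intervalIntegral_mul_sub_rpow_neg {g : ℝ → ℝ → ℝ}
    {a b c t : ℝ} (hg : ContinuousOn (uncurry g) ([[a, b]] ×ˢ [[c, t]])) (hα1 : α < 1) :
    IntervalIntegrable (fun x => ∫ τ in c..t, g x τ * (t - τ) ^ (-α)) volume a b :=
  (hg.integrableOn_mul_sub_rpow_neg hα1).intervalIntegrable_intervalIntegral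

lemma hasDerivAt_sub_rpow_neg {t τ : ℝ} (hτ : τ < t) :
    HasDerivAt (fun τ => (t - τ) ^ (-α)) (α * (t - τ) ^ (-α - 1)) τ := by
  convert ((hasDerivAt_id' τ).const_sub t).rpow_const (p := -α) (Or.inl (sub_pos.2 hτ).ne')
    using 1
  ring

lemma neg_sub_rpow_neg_mul_le_integral {a s t : ℝ} {G G' : ℝ → ℝ} (hα0 : 0 ≤ α)
    (has : a ≤ s) (hst : s < t) (hG : ∀ τ ∈ Icc a s, HasDerivAt G (G' τ) τ)
    (hG' : ContinuousOn G' (Icc a s)) (hG_nonneg : ∀ τ ∈ Icc a s, 0 ≤ G τ) :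
    -((t - s) ^ (-α) * G s) ≤ ∫ τ in a..s, -G' τ * (t - τ) ^ (-α) := by
  rw [← uIcc_of_le has] at hG hG' hG_nonneg
  have hk : ∀ τ ∈ [[a, s]],
      HasDerivAt (fun τ => (t - τ) ^ (-α)) (α * (t - τ) ^ (-α - 1)) τ :=
    fun τ hτ => hasDerivAt_sub_rpow_neg ((uIcc_of_le has ▸ hτ).2.trans_lt hst)
  have hk' : ContinuousOn (fun τ => α * (t - τ) ^ (-α - 1)) [[a, s]] := by
    refine continuousOn_const.mul fun τ hτ => ?_
    have : t - τ ≠ 0 := (sub_pos.2 ((uIcc_of_le has ▸ hτ).2.trans_lt hst)).ne'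
    exact ((continuousAt_const.sub continuousAt_id).rpow_const (Or.inl this)).continuousWithinAt
  have hibp :=
    integral_mul_deriv_eq_deriv_mul hk hG hk'.intervalIntegrable hG'.intervalIntegrable
  have hrest : 0 ≤ (t - a) ^ (-α) * G a + ∫ τ in a..s, α * (t - τ) ^ (-α - 1) * G τ := by
    refine add_nonneg (mul_nonneg (Real.rpow_nonneg (by linarith) _)
      (hG_nonneg a left_mem_uIcc)) (integral_nonneg has fun τ hτ => ?_)
    have := hG_nonneg τ (uIcc_of_le has ▸ hτ)
    have : 0 ≤ t - τ := by linarith [hτ.2]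
    positivity
  calc -((t - s) ^ (-α) * G s)
      ≤ -((t - s) ^ (-α) * G s) + ((t - a) ^ (-α) * G a
          + ∫ τ in a..s, α * (t - τ) ^ (-α - 1) * G τ) := le_add_of_nonneg_right hrest
    _ = -∫ τ in a..s, (t - τ) ^ (-α) * G' τ := by rw [hibp]; ring
    _ = ∫ τ in a..s, -G' τ * (t - τ) ^ (-α) := by
      rw [← intervalIntegral.integral_neg]; exact integral_congr fun τ _ => by ring

lemma integral_neg_deriv_mul_sub_rpow_nonneg {a t : ℝ} {G G' : ℝ → ℝ} (hα0 : 0 ≤ α)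
    (hα1 : α < 1) (hat : a < t) (hG : ∀ τ ∈ Icc a t, HasDerivAt G (G' τ) τ)
    (hG' : ContinuousOn G' (Icc a t)) (hG_nonneg : ∀ τ ∈ Icc a t, 0 ≤ G τ) (hGt : G t = 0) :
    0 ≤ ∫ τ in a..t, -G' τ * (t - τ) ^ (-α) := by
  obtain ⟨M, hM⟩ := isCompact_Icc.exists_bound_of_continuousOn hG'
  have hG_le : ∀ s ∈ Icc a t, G s ≤ M * (t - s) := fun s hs => by
    have := norm_image_sub_le_of_norm_deriv_le_segment' (f := G) (a := s) (b := t)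
      (fun τ hτ => (hG τ ⟨hs.1.trans hτ.1, hτ.2⟩).hasDerivWithinAt)
      (fun τ hτ => hM τ ⟨hs.1.trans hτ.1, hτ.2.le⟩) t ⟨hs.2, le_rfl⟩
    rw [hGt, zero_sub, norm_neg, Real.norm_eq_abs] at this
    exact (le_abs_self _).trans this
  have hlow : ∀ s ∈ Ico a t,
      -(M * (t - s) ^ (1 - α)) ≤ ∫ τ in a..s, -G' τ * (t - τ) ^ (-α) := fun s hs => by
    have hsub : Icc a s ⊆ Icc a t := Icc_subset_Icc_right hs.2.le
    have hts : 0 < t - s := sub_pos.2 hs.2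
    calc -(M * (t - s) ^ (1 - α)) = -((t - s) ^ (-α) * (M * (t - s))) := by
          rw [show 1 - α = -α + 1 by ring, Real.rpow_add_one hts.ne']; ring
      _ ≤ -((t - s) ^ (-α) * G s) := neg_le_neg <|
          mul_le_mul_of_nonneg_left (hG_le s ⟨hs.1, hs.2.le⟩) (Real.rpow_nonneg hts.le _)
      _ ≤ ∫ τ in a..s, -G' τ * (t - τ) ^ (-α) :=
          neg_sub_rpow_neg_mul_le_integral hα0 hs.1 hs.2 (fun τ hτ => hG τ (hsub hτ))
            (hG'.mono hsub) (fun τ hτ => hG_nonneg τ (hsub hτ))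
  have hint : IntervalIntegrable (fun τ => -G' τ * (t - τ) ^ (-α)) volume a t :=
    (uIcc_of_le hat.le ▸ hG'.neg).intervalIntegrable_mul_sub_rpow_neg hα1
  have hprim :
      ContinuousWithinAt (fun s => ∫ τ in a..s, -G' τ * (t - τ) ^ (-α)) (Ico a t) t :=
    (continuousOn_primitive_interval' hint left_mem_uIcc t right_mem_uIcc).mono
      (uIcc_of_le hat.le ▸ Ico_subset_Icc_self)
  have hbound : Tendsto (fun s => -(M * (t - s) ^ (1 - α))) (𝓝 t) (𝓝 0) := by
    have : Continuous fun s : ℝ => -(M * (t - s) ^ (1 - α)) :=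
      (((continuous_const.sub continuous_id).rpow_const fun _ => Or.inr (by linarith)).const_mul
        M).neg
    simpa [Real.zero_rpow (by linarith : 1 - α ≠ 0)] using this.tendsto t
  have := right_nhdsWithin_Ico_neBot hat
  exact le_of_tendsto_of_tendsto (hbound.mono_left nhdsWithin_le_nhds) hprim
    (eventually_nhdsWithin_of_forall hlow)

lemma integral_mul_deriv_mul_sub_rpow_le {a t : ℝ} {v v' : ℝ → ℝ} (hα0 : 0 ≤ α)
    (hα1 : α < 1) (hat : a < t) (hv : ∀ τ ∈ Icc a t, HasDerivAt v (v' τ) τ)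
    (hv' : ContinuousOn v' (Icc a t)) :
    ∫ τ in a..t, v τ * v' τ * (t - τ) ^ (-α)
      ≤ ∫ τ in a..t, v t * v' τ * (t - τ) ^ (-α) := by
  have hvc : ContinuousOn v (Icc a t) :=
    fun τ hτ => (hv τ hτ).continuousAt.continuousWithinAt
  have hkey := integral_neg_deriv_mul_sub_rpow_nonneg (G := fun τ => (v t - v τ) ^ 2 / 2)
    (G' := fun τ => -((v t - v τ) * v' τ)) hα0 hα1 hat
    (fun τ hτ => ((((hv τ hτ).const_sub (v t)).pow 2).div_const 2).congr_deriv (by ring))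
    ((continuousOn_const.sub hvc).mul hv').neg (fun τ _ => by positivity) (by simp)
  rw [← uIcc_of_le hat.le] at hvc hv'
  have hint_top : IntervalIntegrable (fun τ => v t * v' τ * (t - τ) ^ (-α)) volume a t :=
    (continuousOn_const.mul hv').intervalIntegrable_mul_sub_rpow_neg hα1
  have hint_diag : IntervalIntegrable (fun τ => v τ * v' τ * (t - τ) ^ (-α)) volume a t :=
    (hvc.mul hv').intervalIntegrable_mul_sub_rpow_neg hα1
  rw [← sub_nonneg, ← integral_sub hint_top hint_diag]
  exact hkey.trans_eq (integral_congr fun τ _ => by ring)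

end Kernel

lemma mul_caputo (α c t : ℝ) (v : ℝ → ℝ) :
    c * caputo α v t
      = 1 / Real.Gamma (1 - α) * ∫ τ in (0:ℝ)..t, c * deriv v τ * (t - τ) ^ (-α) := by
  simp_rw [caputo, mul_assoc c, intervalIntegral.integral_const_mul]
  ring

section Energy

variable {α a b t : ℝ} {u : ℝ → ℝ → ℝ}

lemma hasDerivAt_intervalIntegral_sq {τ : ℝ}
    (hu : ContinuousOn (uncurry u) ([[a, b]] ×ˢ Icc 0 t))
    (hu' : ContinuousOn (fun p : ℝ × ℝ => deriv (u p.1) p.2) ([[a, b]] ×ˢ Icc 0 t))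
    (hdiff : ∀ x ∈ [[a, b]], ∀ s ∈ Ioo 0 t, DifferentiableAt ℝ (u x) s)
    (hτ : τ ∈ Ioo 0 t) :
    HasDerivAt (fun s => ∫ x in a..b, u x s ^ 2)
      (∫ x in a..b, 2 * u x τ * deriv (u x) τ) τ :=
  hasDerivAt_intervalIntegral_of_continuousOn (F := fun x s => u x s ^ 2)
    (F' := fun x s => 2 * u x s * deriv (u x) s) (hu.fun_pow 2)
    ((continuousOn_const.fun_mul hu).fun_mul hu')
    (fun x hx s hs => ((hdiff x hx s hs).hasDerivAt.pow 2).congr_deriv (by ring)) hτ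

lemma half_caputo_intervalIntegral_sq (hα1 : α < 1) (ht : 0 ≤ t)
    (hu : ContinuousOn (uncurry u) ([[a, b]] ×ˢ Icc 0 t))
    (hu' : ContinuousOn (fun p : ℝ × ℝ => deriv (u p.1) p.2) ([[a, b]] ×ˢ Icc 0 t))
    (hdiff : ∀ x ∈ [[a, b]], ∀ s ∈ Ioo 0 t, DifferentiableAt ℝ (u x) s) :
    1 / 2 * caputo α (fun s => ∫ x in a..b, u x s ^ 2) t
      = 1 / Real.Gamma (1 - α) *
          ∫ x in a..b, ∫ τ in (0:ℝ)..t, u x τ * deriv (u x) τ * (t - τ) ^ (-α) := by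
  have hint :=
    ContinuousOn.integrableOn_mul_sub_rpow_neg (g := fun x τ => u x τ * deriv (u x) τ)
      (uIcc_of_le ht ▸ hu.mul hu') hα1
  have hderiv :
      ∫ τ in (0:ℝ)..t, deriv (fun s => ∫ x in a..b, u x s ^ 2) τ * (t - τ) ^ (-α)
      = 2 * ∫ τ in (0:ℝ)..t, ∫ x in a..b, u x τ * deriv (u x) τ * (t - τ) ^ (-α) := by
    rw [← intervalIntegral.integral_const_mul]
    refine integral_congr_Ioo_of_le ht fun τ hτ => ?_
    rw [(hasDerivAt_intervalIntegral_sq hu hu' hdiff hτ).deriv,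
      ← intervalIntegral.integral_mul_const, ← intervalIntegral.integral_const_mul]
    exact integral_congr fun x _ => by ring
  rw [caputo, hderiv, ← intervalIntegral_intervalIntegral_swap hint]
  ring

end Energy

theorem integral_mul_caputo_ge_general
    (α l T : ℝ) (hα0 : 0 < α) (hα1 : α < 1) (hl : 0 < l)
    (u : ℝ → ℝ → ℝ)
    (hu : ContinuousOn (fun p : ℝ × ℝ => u p.1 p.2) (Set.Icc 0 l ×ˢ Set.Icc 0 T))
    (hut_diff : ∀ x ∈ Set.Icc (0:ℝ) l, ∀ t ∈ Set.Icc (0:ℝ) T, DifferentiableAt ℝ (u x) t)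
    (hut_cont : ContinuousOn (fun p : ℝ × ℝ => deriv (u p.1) p.2)
      (Set.Icc 0 l ×ˢ Set.Icc 0 T)) :
    ∀ t ∈ Set.Ioc (0:ℝ) T,
      (∫ x in (0:ℝ)..l, u x t * caputo α (u x) t)
        ≥ (1 / 2) * caputo α (fun s => ∫ x in (0:ℝ)..l, (u x s) ^ 2) t := by
  intro t ⟨ht0, htT⟩
  rw [← uIcc_of_le hl.le] at hu hut_diff hut_cont
  have hbox : [[0, l]] ×ˢ Icc 0 t ⊆ [[0, l]] ×ˢ Icc 0 T :=
    prod_mono subset_rfl (Icc_subset_Icc_right htT)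
  have hdiff : ∀ x ∈ [[0, l]], ∀ τ ∈ Icc 0 t, HasDerivAt (u x) (deriv (u x) τ) τ :=
    fun x hx τ hτ => (hut_diff x hx τ ⟨hτ.1, hτ.2.trans htT⟩).hasDerivAt
  have hu_t : ContinuousOn (fun p : ℝ × ℝ => u p.1 t) ([[0, l]] ×ˢ Icc 0 t) :=
    hu.comp (continuous_fst.prodMk continuous_const).continuousOn
      fun p hp => ⟨(hbox hp).1, ht0.le, htT⟩
  have hdiag :
      ContinuousOn (uncurry fun x τ => u x τ * deriv (u x) τ) ([[0, l]] ×ˢ [[0, t]]) :=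
    uIcc_of_le ht0.le ▸ (hu.mono hbox).mul (hut_cont.mono hbox)
  have htop :
      ContinuousOn (uncurry fun x τ => u x t * deriv (u x) τ) ([[0, l]] ×ˢ [[0, t]]) :=
    uIcc_of_le ht0.le ▸ hu_t.mul (hut_cont.mono hbox)
  rw [ge_iff_le, half_caputo_intervalIntegral_sq hα1 ht0.le (hu.mono hbox) (hut_cont.mono hbox)
    fun x hx τ hτ => (hdiff x hx τ (Ioo_subset_Icc_self hτ)).differentiableAt,
    integral_congr fun x _ => mul_caputo α (u x t) t (u x), intervalIntegral.integral_const_mul]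
  refine mul_le_mul_of_nonneg_left (integral_mono_on hl.le
    (hdiag.intervalIntegrable_intervalIntegral_mul_sub_rpow_neg hα1)
    (htop.intervalIntegrable_intervalIntegral_mul_sub_rpow_neg hα1) fun x hx => ?_)
    (one_div_nonneg.2 (Real.Gamma_pos_of_pos (by linarith)).le)
  have hx' : x ∈ [[0, l]] := by rwa [uIcc_of_le hl.le]
  exact integral_mul_deriv_mul_sub_rpow_le hα0.le hα1 ht0 (hdiff x hx')
    ((hut_cont.uncurry_left (f := fun x τ => deriv (u x) τ) x hx').mono
      (Icc_subset_Icc_right htT))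

/-- For `u` continuous on `[0,l]×[0,T]` with continuous `∂u/∂t`, such that each
`t ↦ u(x,t)` is absolutely continuous, one has
`∫_0^l u(x,t) ∂_{0t}^α u(x,t) dx ≥ (1/2) ∂_{0t}^α (∫_0^l u(x,t)² dx)`
for all `t ∈ (0,T]`. -/
theorem integral_mul_caputo_ge
    (α l T : ℝ) (hα0 : 0 < α) (hα1 : α < 1) (hl : 0 < l) (hT : 0 < T)
    (u : ℝ → ℝ → ℝ)
    (hu : ContinuousOn (fun p : ℝ × ℝ => u p.1 p.2) (Set.Icc 0 l ×ˢ Set.Icc 0 T))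
    (hut_diff : ∀ x ∈ Set.Icc (0:ℝ) l, ∀ t ∈ Set.Icc (0:ℝ) T, DifferentiableAt ℝ (u x) t)
    (hut_cont : ContinuousOn (fun p : ℝ × ℝ => deriv (u p.1) p.2)
      (Set.Icc 0 l ×ˢ Set.Icc 0 T))
    (hac : ∀ x ∈ Set.Icc (0:ℝ) l, AbsContinuousOn (u x) 0 T) :
    ∀ t ∈ Set.Ioc (0:ℝ) T,
      (∫ x in (0:ℝ)..l, u x t * caputo α (u x) t)
        ≥ (1 / 2) * caputo α (fun s => ∫ x in (0:ℝ)..l, (u x s) ^ 2) t :=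
  integral_mul_caputo_ge_general α l T hα0 hα1 hl u hu hut_diff hut_cont
end

section
/- Let l > 0 and let u : [0,l] → ℝ be continuously differentiable. Then for every ε > 0, both u(0)² and u(l)² are bounded by ε ∫_0^l u′(x)² dx + (1/ε + 1/l) ∫_0^l u(x)² dx. -/
open MeasureTheory Set intervalIntegral

/-!
By the mean value theorem for integrals, `u(c)² = (1/l) ∫_0^l u²` at some `c ∈ [0,l]`. For any
other point `x`, the fundamental theorem of calculus bounds `u(x)² - u(c)²` by
`∫_0^l |2 u u'|`, and Young's inequality `|2 u u'| ≤ ε u'² + u²/ε` bounds that integral.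
-/

theorem abs_two_mul_le_mul_sq_add_one_div_mul_sq {ε : ℝ} (hε : 0 < ε) (a b : ℝ) :
    |2 * a * b| ≤ ε * b ^ 2 + 1 / ε * a ^ 2 := by
  have key : 2 * (|a| * |b|) * ε ≤ (ε * b ^ 2 + 1 / ε * a ^ 2) * ε := by
    have := sq_nonneg (ε * |b| - |a|)
    field_simp
    nlinarith [sq_abs a, sq_abs b]
  rw [abs_mul, abs_mul, abs_two, mul_assoc]
  exact le_of_mul_le_mul_right key hε

theorem abs_sub_le_integral_abs_deriv {f f' : ℝ → ℝ} {a b x y : ℝ}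
    (hf : ∀ t ∈ Icc a b, HasDerivAt f (f' t) t) (hf' : IntervalIntegrable f' volume a b)
    (hx : x ∈ Icc a b) (hy : y ∈ Icc a b) :
    |f y - f x| ≤ ∫ t in a..b, |f' t| := by
  wlog hxy : x ≤ y generalizing x y
  · simpa only [abs_sub_comm] using this hy hx (le_of_not_ge hxy)
  have hsub : uIcc x y ⊆ Icc a b := by
    rw [uIcc_of_le hxy]
    exact Icc_subset_Icc hx.1 hy.2
  have hsub' : uIcc x y ⊆ uIcc a b := hsub.trans Icc_subset_uIcc
  rw [← integral_eq_sub_of_hasDerivAt (fun t ht => hf t (hsub ht)) (hf'.mono_set hsub')]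
  calc |∫ t in x..y, f' t| ≤ ∫ t in x..y, |f' t| := abs_integral_le_integral_abs hxy
    _ ≤ ∫ t in a..b, |f' t| :=
      integral_mono_interval hx.1 hxy hy.2 (Filter.Eventually.of_forall fun _ => abs_nonneg _)
        hf'.abs

theorem integral_abs_two_mul_le {f g : ℝ → ℝ} {a b ε : ℝ} (hab : a ≤ b) (hε : 0 < ε)
    (hf : ContinuousOn f (uIcc a b)) (hg : ContinuousOn g (uIcc a b)) :
    ∫ t in a..b, |2 * f t * g t| ≤ ε * (∫ t in a..b, g t ^ 2) + 1 / ε * ∫ t in a..b, f t ^ 2 := by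
  have hf2 : IntervalIntegrable (fun t => f t ^ 2) volume a b := (hf.pow 2).intervalIntegrable
  have hg2 : IntervalIntegrable (fun t => g t ^ 2) volume a b := (hg.pow 2).intervalIntegrable
  rw [← intervalIntegral.integral_const_mul, ← intervalIntegral.integral_const_mul,
    ← integral_add (hg2.const_mul ε) (hf2.const_mul (1 / ε))]
  exact integral_mono_on hab ((continuousOn_const.mul hf).mul hg).intervalIntegrable.abs
    ((hg2.const_mul ε).add (hf2.const_mul (1 / ε)))
    fun t _ => abs_two_mul_le_mul_sq_add_one_div_mul_sq hε (f t) (g t)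

theorem sq_le_integral_deriv_sq_add_integral_sq {u : ℝ → ℝ} {a b ε x : ℝ} (hab : a < b)
    (hε : 0 < ε) (hdiff : ∀ t ∈ Icc a b, DifferentiableAt ℝ u t)
    (hderiv : ContinuousOn (deriv u) (Icc a b)) (hx : x ∈ Icc a b) :
    u x ^ 2 ≤ ε * (∫ t in a..b, deriv u t ^ 2)
      + (1 / ε + 1 / (b - a)) * ∫ t in a..b, u t ^ 2 := by
  have hIcc : uIcc a b = Icc a b := uIcc_of_le hab.le
  have hu : ContinuousOn u (uIcc a b) :=
    hIcc ▸ fun t ht => (hdiff t ht).continuousAt.continuousWithinAt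
  obtain ⟨c, hc, hc_avg⟩ := exists_eq_interval_average hab.ne (hu.fun_pow 2)
  rw [interval_average_eq_div] at hc_avg
  have hc' : c ∈ Icc a b := hIcc ▸ uIoo_subset_uIcc_self hc
  have hvar : |u x ^ 2 - u c ^ 2| ≤ ∫ t in a..b, |2 * u t * deriv u t| := by
    refine abs_sub_le_integral_abs_deriv (f := fun t => u t ^ 2) (fun t ht => ?_) ?_ hc' hx
    · simpa using (hdiff t ht).hasDerivAt.fun_pow 2
    · exact ((continuousOn_const.mul hu).mul (hIcc ▸ hderiv)).intervalIntegrable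
  have hyoung := integral_abs_two_mul_le (ε := ε) hab.le hε hu (hIcc ▸ hderiv)
  calc u x ^ 2 = u c ^ 2 + (u x ^ 2 - u c ^ 2) := by ring
    _ ≤ (∫ t in a..b, u t ^ 2) / (b - a) + ∫ t in a..b, |2 * u t * deriv u t| :=
      add_le_add hc_avg.le ((le_abs_self _).trans hvar)
    _ ≤ _ := by linear_combination hyoung

/-- Trace-type inequality: for a continuously differentiable `u` on `[0,l]` and any
`ε > 0`, both `u(0)²` and `u(l)²` are bounded by
`ε ∫_0^l u'(x)² dx + (1/ε + 1/l) ∫_0^l u(x)² dx`. -/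
theorem trace_inequality
    (l : ℝ) (hl : 0 < l) (u : ℝ → ℝ)
    (hdiff : ∀ x ∈ Set.Icc (0:ℝ) l, DifferentiableAt ℝ u x)
    (hderiv_cont : ContinuousOn (deriv u) (Set.Icc 0 l)) :
    ∀ ε > (0:ℝ),
      (u 0) ^ 2 ≤ ε * (∫ x in (0:ℝ)..l, (deriv u x) ^ 2)
          + (1 / ε + 1 / l) * ∫ x in (0:ℝ)..l, (u x) ^ 2
      ∧ (u l) ^ 2 ≤ ε * (∫ x in (0:ℝ)..l, (deriv u x) ^ 2)
          + (1 / ε + 1 / l) * ∫ x in (0:ℝ)..l, (u x) ^ 2 := by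
  intro ε hε
  have bound := fun x (hx : x ∈ Icc 0 l) =>
    sub_zero l ▸ sq_le_integral_deriv_sq_add_integral_sq hl hε hdiff hderiv_cont hx
  exact ⟨bound 0 (left_mem_Icc.2 hl.le), bound l (right_mem_Icc.2 hl.le)⟩
end
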